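/- arXiv:0908.4171 — 3 statements merged into one kernel-verified Lean document; each statement's English description precedes it below -/
import Mathlib

section
/- Let (A_1, A_2, …) be a sequence of d×d real matrices with all entries positive, such that γ := sup_i τ(A_i) < 1. Then there exist a probability vector X* ∈ S_d with all entries positive and a constant C > 0 such that for every X ∈ S_d and every n ≥ 1, ‖P_n X/‖P_n X‖ − X*‖ ≤ C·γ^n, where P_n := A_1⋯A_n. -/
open Matrix Filter Finset Topology
open scoped ENNReal Classical

/-- Hypothesis (H): the nonzero entries of `A` form a nonempty rectangular block
`I_A × J_A`. -/
def satH {d1 d2 : ℕ} (A : Matrix (Fin d1) (Fin d2) ℝ) : Prop :=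
  ∃ (I : Set (Fin d1)) (J : Set (Fin d2)), I.Nonempty ∧ J.Nonempty ∧
    ∀ i j, A i j ≠ 0 ↔ i ∈ I ∧ j ∈ J

/-- The δ-coefficient of a matrix: `sup` of `log((A i j · A k l)/(A k j · A i l))` over
indices in the nonzero block if (H) holds, `+∞` otherwise. -/
noncomputable def deltaC {d1 d2 : ℕ} (A : Matrix (Fin d1) (Fin d2) ℝ) : ℝ≥0∞ :=
  if satH A then
    ENNReal.ofReal (sSup {x | ∃ i k j l, A i j ≠ 0 ∧ A k j ≠ 0 ∧ A i l ≠ 0 ∧ A k l ≠ 0 ∧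
      x = Real.log (A i j * A k l / (A k j * A i l))})
  else ⊤

/-- The generalized contraction coefficient `τ(A) = tanh(δ(A)/4)`, equal to `1`
when `δ(A) = +∞`. -/
noncomputable def tauC {d1 d2 : ℕ} (A : Matrix (Fin d1) (Fin d2) ℝ) : ℝ :=
  if deltaC A = ⊤ then 1 else Real.tanh ((deltaC A).toReal / 4)

/-- ℓ¹-norm (sum of absolute values of the entries) of a vector. -/
noncomputable def l1 {d : ℕ} (v : Fin d → ℝ) : ℝ := ∑ i, |v i|

/-- Normalization of a vector by its ℓ¹-norm. -/
noncomputable def nrm {d : ℕ} (v : Fin d → ℝ) : Fin d → ℝ := (l1 v)⁻¹ • v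

/-- Probability vector: nonnegative entries summing to `1`. -/
def probVec {d : ℕ} (X : Fin d → ℝ) : Prop := (∀ i, 0 ≤ X i) ∧ ∑ i, X i = 1

/-- `blockProd A m n = A (m+1) * A (m+2) * ⋯ * A n` (identity if `n ≤ m`). -/
noncomputable def blockProd {d : ℕ} (A : ℕ → Matrix (Fin d) (Fin d) ℝ) (m n : ℕ) :
    Matrix (Fin d) (Fin d) ℝ :=
  ((List.range (n - m)).map fun i => A (m + 1 + i)).prod

/-!
Birkhoff's contraction theorem for Hilbert's projective metric. If all cross ratios
`A i j * A k l / (A k j * A i l)` of a positive matrix are at most `q ^ 2 = exp δ(A)`, then `A`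
shrinks Hilbert distances by the factor `τ(A) = tanh (δ(A) / 4) = (q - 1) / (q + 1)`. Indeed
`(A x)_i / (A y)_i` and `(A x)_k / (A y)_k` are averages of `t = x / y` with weights `A i * y` and
`A k * y`, whose cross ratios are again at most `q ^ 2`; comparing two such averages comes down to
the scalar inequality `(1 + p q) / (p + q) ≤ p ^ ((q - 1) / (q + 1))` for `p, q ≥ 1`.

Hence `P_n x` and `P_n y` are at Hilbert distance `O(γ ^ n)` for all nonzero `x, y ≥ 0`. As
`P_n' = P_n A_(n+1) ⋯ A_n'`, the normalized vectors `P_n 1 / ‖P_n 1‖` form a Cauchy sequence, and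
its limit, which is positive, attracts every normalized orbit at rate `γ ^ n`: between probability
vectors the `ℓ¹` distance is at most `2 (R - 1)` when the Hilbert distance is `log R`.
-/
open Real

theorem one_add_mul_div_add_le_rpow {p q : ℝ} (hp : 1 ≤ p) (hq : 1 ≤ q) :
    (1 + p * q) / (p + q) ≤ p ^ ((q - 1) / (q + 1)) := by
  set τ := (q - 1) / (q + 1)
  let f : ℝ → ℝ := fun y => τ * log y + log (q + y) - log (1 + q * y)
  have hf : ∀ y, 0 < y → HasDerivAt f (τ / y + 1 / (q + y) - q / (1 + q * y)) y := by
    intro y hy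
    have h := ((((hasDerivAt_id' y).log hy.ne').const_mul τ).add
      (((hasDerivAt_id' y).const_add q).log (by linarith : q + y ≠ 0))).sub
      ((((hasDerivAt_id' y).const_mul q).const_add 1).log (by nlinarith : 1 + q * y ≠ 0))
    exact h.congr_deriv (by ring)
  have hmono : MonotoneOn f (Set.Ici 1) := by
    refine monotoneOn_of_hasDerivWithinAt_nonneg (convex_Ici 1)
      (fun y hy => (hf y (by linarith [Set.mem_Ici.1 hy])).continuousAt.continuousWithinAt)
      (fun y hy => (hf y ?_).hasDerivWithinAt) fun y hy => ?_
    · rw [interior_Ici] at hy; linarith [Set.mem_Ioi.1 hy]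
    · rw [interior_Ici] at hy
      have hy0 : 0 < y := by linarith [Set.mem_Ioi.1 hy]
      have : τ / y + 1 / (q + y) - q / (1 + q * y)
          = (q - 1) * q * (y - 1) ^ 2 / ((q + 1) * y * (q + y) * (1 + q * y)) := by
        simp only [τ]; field_simp; ring
      rw [this]
      have : 0 ≤ q - 1 := by linarith
      positivity
  have h1p : f 1 ≤ f p := hmono Set.self_mem_Ici hp hp
  have hf1 : f 1 = 0 := by simp [f, add_comm q 1]
  have hp0 : 0 < p := by linarith
  rw [← log_le_log_iff (by positivity) (by positivity), log_rpow hp0,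
    log_div (by positivity) (by positivity)]
  simp only [f, hf1, mul_comm q p, add_comm q p] at h1p
  linarith

theorem one_add_mul_le_rpow_mul_one_add_mul {b q u v : ℝ} (hb : 1 ≤ b) (hq : 1 ≤ q) (hv : 0 ≤ v)
    (huv : u * (1 - v) ≤ q ^ 2 * (v * (1 - u))) :
    1 + (b - 1) * u ≤ b ^ ((q - 1) / (q + 1)) * (1 + (b - 1) * v) := by
  obtain ⟨p, hp, rfl⟩ : ∃ p, 1 ≤ p ∧ b = p ^ 2 :=
    ⟨√b, one_le_sqrt.2 hb, (sq_sqrt (by linarith)).symm⟩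
  have hq2 : 0 ≤ q ^ 2 - 1 := by nlinarith
  have hp2 : 0 ≤ p ^ 2 - 1 := by nlinarith
  have hw : 0 < 1 + (q ^ 2 - 1) * v := by positivity
  have hu : (1 + (p ^ 2 - 1) * u) * (1 + (q ^ 2 - 1) * v) ≤ 1 + (p ^ 2 * q ^ 2 - 1) * v := by
    have : u * (1 + (q ^ 2 - 1) * v) ≤ q ^ 2 * v := by linarith
    nlinarith [mul_le_mul_of_nonneg_left this hp2]
  -- the factor `((1 + p q) / (p + q)) ^ 2` is sharp: equality holds at `v = 1 / (1 + p q)`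
  have hquad : (p + q) ^ 2 * (1 + (p ^ 2 * q ^ 2 - 1) * v)
      ≤ (1 + p * q) ^ 2 * ((1 + (q ^ 2 - 1) * v) * (1 + (p ^ 2 - 1) * v)) := by
    have : (1 + p * q) ^ 2 * ((1 + (q ^ 2 - 1) * v) * (1 + (p ^ 2 - 1) * v))
        - (p + q) ^ 2 * (1 + (p ^ 2 * q ^ 2 - 1) * v)
        = (p ^ 2 - 1) * (q ^ 2 - 1) * (1 - (1 + p * q) * v) ^ 2 := by ring
    nlinarith [mul_nonneg (mul_nonneg hp2 hq2) (sq_nonneg (1 - (1 + p * q) * v))]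
  have hpow : ((1 + p * q) / (p + q)) ^ 2 ≤ (p ^ 2) ^ ((q - 1) / (q + 1)) := by
    rw [← rpow_pow_comm (by linarith)]
    gcongr
    exact one_add_mul_div_add_le_rpow hp hq
  refine le_of_mul_le_mul_right ?_ hw
  calc (1 + (p ^ 2 - 1) * u) * (1 + (q ^ 2 - 1) * v) ≤ 1 + (p ^ 2 * q ^ 2 - 1) * v := hu
    _ ≤ ((1 + p * q) / (p + q)) ^ 2 * ((1 + (q ^ 2 - 1) * v) * (1 + (p ^ 2 - 1) * v)) := by
      rw [div_pow, div_mul_eq_mul_div, le_div_iff₀ (by positivity)]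
      linarith
    _ ≤ (p ^ 2) ^ ((q - 1) / (q + 1)) * ((1 + (q ^ 2 - 1) * v) * (1 + (p ^ 2 - 1) * v)) := by
      gcongr
    _ = _ := by ring

section CrossRatio

variable {ι : Type*}

/-- `CrossRatioLE R x y`: Hilbert's projective distance between `x` and `y` is at most `log R`. -/
def CrossRatioLE (R : ℝ) (x y : ι → ℝ) : Prop :=
  ∀ i k, x i * y k ≤ R * (y i * x k)

namespace CrossRatioLE

variable {R : ℝ} {x y : ι → ℝ}

theorem symm (h : CrossRatioLE R x y) : CrossRatioLE R y x := fun i k => by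
  linarith [h k i, mul_comm (x k) (y i), mul_comm (y k) (x i)]

theorem mono (h : CrossRatioLE R x y) {R' : ℝ} (hR : R ≤ R') (hx : 0 ≤ x) (hy : 0 ≤ y) :
    CrossRatioLE R' x y := fun i k =>
  (h i k).trans (mul_le_mul_of_nonneg_right hR (mul_nonneg (hy i) (hx k)))

theorem smul (h : CrossRatioLE R x y) {a b : ℝ} (ha : 0 ≤ a) (hb : 0 ≤ b) :
    CrossRatioLE R (a • x) (b • y) := fun i k => by
  simp only [Pi.smul_apply, smul_eq_mul]
  linarith [mul_le_mul_of_nonneg_left (h i k) (mul_nonneg ha hb)]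

theorem mul (h : CrossRatioLE R x y) {w : ι → ℝ} (hw : 0 ≤ w) :
    CrossRatioLE R (x * w) (y * w) := fun i k => by
  simp only [Pi.mul_apply]
  linarith [mul_le_mul_of_nonneg_left (h i k) (mul_nonneg (hw i) (hw k))]

theorem le_mul_apply [Fintype ι] (h : CrossRatioLE R x y) (hx : ∑ i, x i = 1)
    (hy : ∑ i, y i = 1) (i : ι) : x i ≤ R * y i :=
  calc x i = ∑ k, x i * y k := by rw [← mul_sum, hy, mul_one]
    _ ≤ ∑ k, R * y i * x k := sum_le_sum fun k _ => (h i k).trans_eq (by ring)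
    _ = R * y i := by rw [← mul_sum, hx, mul_one]

theorem dotProduct_mul_le [Fintype ι] (h : CrossRatioLE R x y) {f g : ι → ℝ} (hf : 0 ≤ f)
    (hg : 0 ≤ g) : (x ⬝ᵥ f) * (y ⬝ᵥ g) ≤ R * ((x ⬝ᵥ g) * (y ⬝ᵥ f)) := by
  calc (x ⬝ᵥ f) * (y ⬝ᵥ g) = ∑ j, ∑ l, (x j * y l) * (f j * g l) := by
        rw [dotProduct, dotProduct, sum_mul_sum]
        exact sum_congr rfl fun j _ => sum_congr rfl fun l _ => by ring
    _ ≤ ∑ j, ∑ l, R * (y j * x l) * (f j * g l) :=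
        sum_le_sum fun j _ => sum_le_sum fun l _ =>
          mul_le_mul_of_nonneg_right (h j l) (mul_nonneg (hf j) (hg l))
    _ = R * ((x ⬝ᵥ g) * (y ⬝ᵥ f)) := by
        rw [dotProduct, dotProduct, sum_mul_sum, sum_comm, mul_sum]
        exact sum_congr rfl fun j _ => by
          rw [mul_sum]; exact sum_congr rfl fun l _ => by ring

theorem dotProduct_one_add_mul_le [Fintype ι] [Nonempty ι] {q r : ℝ} {a b σ : ι → ℝ}
    (hab : CrossRatioLE (q ^ 2) a b) (hq : 1 ≤ q) (hr : 1 ≤ r) (ha : ∀ j, 0 < a j)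
    (hb : ∀ j, 0 < b j) (hσ0 : 0 ≤ σ) (hσ1 : 0 ≤ 1 - σ) :
    (∑ j, a j + (r - 1) * a ⬝ᵥ σ) * ∑ j, b j ≤
      r ^ ((q - 1) / (q + 1)) * ((∑ j, a j) * (∑ j, b j + (r - 1) * b ⬝ᵥ σ)) := by
  set SA := ∑ j, a j
  set SB := ∑ j, b j
  set U := a ⬝ᵥ σ
  set V := b ⬝ᵥ σ
  have hSA : 0 < SA := sum_pos (fun j _ => ha j) univ_nonempty
  have hSB : 0 < SB := sum_pos (fun j _ => hb j) univ_nonempty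
  have hV : 0 ≤ V := sum_nonneg fun j _ => mul_nonneg (hb j).le (hσ0 j)
  have huv : U / SA * (1 - V / SB) ≤ q ^ 2 * (V / SB * (1 - U / SA)) := by
    have h := hab.dotProduct_mul_le hσ0 hσ1
    simp only [dotProduct_sub, dotProduct_one] at h
    have e₁ : U / SA * (1 - V / SB) = U * (SB - V) / (SA * SB) := by field_simp
    have e₂ : q ^ 2 * (V / SB * (1 - U / SA)) = q ^ 2 * ((SA - U) * V) / (SA * SB) := by
      field_simp
    rw [e₁, e₂]
    exact div_le_div_of_nonneg_right h (by positivity)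
  have h := one_add_mul_le_rpow_mul_one_add_mul hr hq (div_nonneg hV hSB.le) huv
  calc (SA + (r - 1) * U) * SB = SA * SB * (1 + (r - 1) * (U / SA)) := by field_simp
    _ ≤ SA * SB * (r ^ ((q - 1) / (q + 1)) * (1 + (r - 1) * (V / SB))) := by gcongr
    _ = r ^ ((q - 1) / (q + 1)) * (SA * (SB + (r - 1) * V)) := by field_simp

theorem dotProduct_mul_sum_le [Fintype ι] [Nonempty ι] {q : ℝ} {a b t : ι → ℝ}
    (hab : CrossRatioLE (q ^ 2) a b) (hq : 1 ≤ q) (ha : ∀ j, 0 < a j) (hb : ∀ j, 0 < b j)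
    (ht : ∀ j, 0 < t j) (htR : ∀ j l, t j ≤ R * t l) :
    (a ⬝ᵥ t) * ∑ j, b j ≤ R ^ ((q - 1) / (q + 1)) * ((∑ j, a j) * (b ⬝ᵥ t)) := by
  obtain ⟨j₀, hj₀⟩ := Finite.exists_min t
  obtain ⟨j₁, hj₁⟩ := Finite.exists_max t
  have hβ : 0 < t j₀ := ht j₀
  have hβB : t j₀ ≤ t j₁ := hj₀ j₁
  -- if `t` is constant then `σ = 0`, by the junk value of division by zero
  set σ : ι → ℝ := fun j => (t j - t j₀) / (t j₁ - t j₀)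
  have hσ0 : 0 ≤ σ := fun j => div_nonneg (sub_nonneg.2 (hj₀ j)) (sub_nonneg.2 hβB)
  have hσ1 : 0 ≤ 1 - σ := fun j =>
    sub_nonneg.2 (div_le_one_of_le₀ (sub_le_sub_right (hj₁ j) _) (sub_nonneg.2 hβB))
  have htσ : ∀ j, t j = t j₀ * (1 + (t j₁ / t j₀ - 1) * σ j) := fun j => by
    rcases eq_or_ne (t j₁ - t j₀) 0 with h | h
    · show t j = t j₀ * (1 + (t j₁ / t j₀ - 1) * ((t j - t j₀) / (t j₁ - t j₀)))
      rw [h, div_zero, mul_zero, add_zero, mul_one]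
      linarith [hj₀ j, hj₁ j]
    · simp only [σ]; field_simp; ring
  have hdot : ∀ c : ι → ℝ, c ⬝ᵥ t = t j₀ * (∑ j, c j + (t j₁ / t j₀ - 1) * c ⬝ᵥ σ) := fun c => by
    simp only [dotProduct, mul_sum, ← sum_add_distrib]
    exact sum_congr rfl fun j _ => by rw [htσ j]; ring
  have h := hab.dotProduct_one_add_mul_le hq ((one_le_div hβ).2 hβB) ha hb hσ0 hσ1
  calc (a ⬝ᵥ t) * ∑ j, b j
      = t j₀ * ((∑ j, a j + (t j₁ / t j₀ - 1) * a ⬝ᵥ σ) * ∑ j, b j) := by rw [hdot]; ring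
    _ ≤ t j₀ * ((t j₁ / t j₀) ^ ((q - 1) / (q + 1)) *
          ((∑ j, a j) * (∑ j, b j + (t j₁ / t j₀ - 1) * b ⬝ᵥ σ))) := by gcongr
    _ = (t j₁ / t j₀) ^ ((q - 1) / (q + 1)) * ((∑ j, a j) * (b ⬝ᵥ t)) := by rw [hdot b]; ring
    _ ≤ R ^ ((q - 1) / (q + 1)) * ((∑ j, a j) * (b ⬝ᵥ t)) := by
        gcongr
        exacts [mul_nonneg (sum_nonneg fun j _ => (ha j).le)
            (sum_nonneg fun j _ => mul_nonneg (hb j).le (ht j).le),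
          div_nonneg (ht j₁).le hβ.le, (div_le_iff₀ hβ).2 (htR j₁ j₀)]

end CrossRatioLE

end CrossRatio

section Matrix

variable {ι κ : Type*} [Fintype κ]

theorem mulVec_pos_of_pos {B : Matrix ι κ ℝ} (hB : ∀ i j, 0 < B i j) {x : κ → ℝ} (hx : 0 ≤ x)
    (hx0 : x ≠ 0) (i : ι) : 0 < (B *ᵥ x) i := by
  obtain ⟨j, hj⟩ := Function.ne_iff.1 hx0
  exact sum_pos' (fun l _ => mul_nonneg (hB i l).le (hx l))
    ⟨j, mem_univ j, mul_pos (hB i j) (lt_of_le_of_ne (hx j) (Ne.symm hj))⟩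

theorem crossRatioLE_mulVec {A : Matrix ι κ ℝ} {R : ℝ} (hA : ∀ i k, CrossRatioLE R (A i) (A k))
    {x y : κ → ℝ} (hx : 0 ≤ x) (hy : 0 ≤ y) : CrossRatioLE R (A *ᵥ x) (A *ᵥ y) :=
  fun i k => (hA i k).dotProduct_mul_le hx hy

theorem CrossRatioLE.mulVec_rpow [Nonempty κ] {A : Matrix ι κ ℝ} {q R : ℝ} {x y : κ → ℝ}
    (h : CrossRatioLE R x y) (hq : 1 ≤ q) (hA : ∀ i j, 0 < A i j)
    (hAq : ∀ i k, CrossRatioLE (q ^ 2) (A i) (A k)) (hx : ∀ j, 0 < x j) (hy : ∀ j, 0 < y j) :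
    CrossRatioLE (R ^ ((q - 1) / (q + 1))) (A *ᵥ x) (A *ᵥ y) := by
  intro i k
  have hAx : ∀ i, (A i * y) ⬝ᵥ (fun j => x j / y j) = (A *ᵥ x) i := fun i =>
    sum_congr rfl fun j _ => by simp only [Pi.mul_apply]; field_simp [(hy j).ne']
  have key := ((hAq i k).mul fun j => (hy j).le).dotProduct_mul_sum_le (R := R) hq
    (fun j => mul_pos (hA i j) (hy j)) (fun j => mul_pos (hA k j) (hy j))
    (fun j => div_pos (hx j) (hy j)) fun j l => by
      rw [div_le_iff₀ (hy j), mul_div_assoc', div_mul_eq_mul_div, le_div_iff₀ (hy l)]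
      linarith [h j l]
  rw [hAx, hAx] at key
  exact key

end Matrix

section BlockProd

variable {d : ℕ} (A : ℕ → Matrix (Fin d) (Fin d) ℝ)

theorem blockProd_self (m : ℕ) : blockProd A m m = 1 := by simp [blockProd]

theorem blockProd_succ (m : ℕ) : blockProd A m (m + 1) = A (m + 1) := by simp [blockProd]

theorem blockProd_mul_blockProd {m n p : ℕ} (hmn : m ≤ n) (hnp : n ≤ p) :
    blockProd A m n * blockProd A n p = blockProd A m p := by
  obtain ⟨a, rfl⟩ := Nat.exists_eq_add_of_le hmn
  obtain ⟨b, rfl⟩ := Nat.exists_eq_add_of_le hnp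
  simp only [blockProd, add_assoc, Nat.add_sub_cancel_left, Nat.add_sub_add_left, List.range_add,
    List.map_append, List.prod_append, List.map_map]
  congr 3
  funext i
  simp only [Function.comp_apply]
  congr 1
  omega

variable {A}

theorem blockProd_pos (hpos : ∀ s, 1 ≤ s → ∀ i j, 0 < A s i j) {m n : ℕ} (hmn : m < n)
    (i j : Fin d) : 0 < blockProd A m n i j := by
  induction n, hmn using Nat.le_induction generalizing i j with
  | base => rw [blockProd_succ]; exact hpos _ (by omega) i j
  | succ n hmn ih =>
    rw [← blockProd_mul_blockProd A (by omega) n.le_succ, blockProd_succ, mul_apply]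
    exact sum_pos (fun l _ => mul_pos (ih i l) (hpos _ (by omega) l j)) ⟨i, mem_univ _⟩

theorem crossRatioLE_blockProd_mulVec {q : ℝ} (hq : 1 ≤ q)
    (hpos : ∀ s, 1 ≤ s → ∀ i j, 0 < A s i j)
    (hcross : ∀ s, 1 ≤ s → ∀ i k, CrossRatioLE (q ^ 2) (A s i) (A s k)) (n m : ℕ)
    {x y : Fin d → ℝ} (hx : 0 ≤ x) (hx0 : x ≠ 0) (hy : 0 ≤ y) (hy0 : y ≠ 0) :
    CrossRatioLE (1 + (q + 1) ^ 2 * ((q - 1) / (q + 1)) ^ (n + 1))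
      (blockProd A m (m + n + 1) *ᵥ x) (blockProd A m (m + n + 1) *ᵥ y) := by
  obtain ⟨j, -⟩ := Function.ne_iff.1 hx0
  have : Nonempty (Fin d) := ⟨j⟩
  have hq1 : q + 1 ≠ 0 := by linarith
  have hτ0 : 0 ≤ (q - 1) / (q + 1) := div_nonneg (by linarith) (by linarith)
  have hτ1 : (q - 1) / (q + 1) ≤ 1 := div_le_one_of_le₀ (by linarith) (by linarith)
  have hnonneg : ∀ s, 1 ≤ s → ∀ z : Fin d → ℝ, 0 ≤ z → 0 ≤ A s *ᵥ z := fun s hs z hz i =>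
    (sum_nonneg fun j _ => mul_nonneg (hpos s hs i j).le (hz j) : 0 ≤ ∑ j, A s i j * z j)
  induction n generalizing m with
  | zero =>
    rw [add_zero, blockProd_succ]
    refine (crossRatioLE_mulVec (hcross _ le_add_self) hx hy).mono (le_of_eq ?_)
      (hnonneg _ le_add_self x hx) (hnonneg _ le_add_self y hy)
    rw [zero_add, pow_one]
    field_simp
    ring
  | succ n ih =>
    rw [show m + (n + 1) + 1 = m + 1 + n + 1 by ring,
      ← blockProd_mul_blockProd A m.le_succ (by omega), blockProd_succ, ← mulVec_mulVec,
      ← mulVec_mulVec]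
    have hQ : ∀ z : Fin d → ℝ, 0 ≤ z → z ≠ 0 →
        ∀ i, 0 < (blockProd A (m + 1) (m + 1 + n + 1) *ᵥ z) i := fun z hz hz0 =>
      mulVec_pos_of_pos (blockProd_pos hpos (by omega)) hz hz0
    refine ((ih (m + 1)).mulVec_rpow hq (hpos _ le_add_self) (hcross _ le_add_self)
      (hQ x hx hx0) (hQ y hy hy0)).mono ?_ (hnonneg _ le_add_self _ fun i => (hQ x hx hx0 i).le)
      (hnonneg _ le_add_self _ fun i => (hQ y hy hy0 i).le)
    calc (1 + (q + 1) ^ 2 * ((q - 1) / (q + 1)) ^ (n + 1)) ^ ((q - 1) / (q + 1))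
        ≤ 1 + (q - 1) / (q + 1) * ((q + 1) ^ 2 * ((q - 1) / (q + 1)) ^ (n + 1)) :=
          rpow_one_add_le_one_add_mul_self (by nlinarith [pow_nonneg hτ0 (n + 1)]) hτ0 hτ1
      _ = 1 + (q + 1) ^ 2 * ((q - 1) / (q + 1)) ^ (n + 1 + 1) := by ring

end BlockProd

section Simplex

variable {d : ℕ}

theorem l1_nonneg (v : Fin d → ℝ) : 0 ≤ l1 v := sum_nonneg fun _ _ => abs_nonneg _

theorem continuous_l1 : Continuous (l1 : (Fin d → ℝ) → ℝ) :=
  continuous_finsetSum _ fun i _ => (continuous_apply i).abs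

theorem dist_le_l1 (v w : Fin d → ℝ) : dist v w ≤ l1 (v - w) :=
  (dist_pi_le_iff (l1_nonneg _)).2 fun i => (Real.dist_eq _ _).trans_le <|
    single_le_sum (f := fun i => |(v - w) i|) (fun _ _ => abs_nonneg _) (mem_univ i)

theorem isClosed_probVec : IsClosed {X : Fin d → ℝ | probVec X} := by
  simp only [probVec, Set.ofPred_and, Set.ofPred_forall]
  exact (isClosed_iInter fun i => isClosed_le continuous_const (continuous_apply i)).inter
    (isClosed_eq (continuous_finsetSum _ fun i _ => continuous_apply i) continuous_const)

theorem probVec_ne_zero {X : Fin d → ℝ} (hX : probVec X) : X ≠ 0 := fun h => by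
  simpa [h] using hX.2

theorem probVec_nrm {v : Fin d → ℝ} (hv : 0 ≤ v) (hv0 : v ≠ 0) : probVec (nrm v) := by
  have hl1 : l1 v = ∑ i, v i := sum_congr rfl fun i _ => abs_of_nonneg (hv i)
  have hl1_ne : l1 v ≠ 0 := by
    rw [l1, Ne, sum_eq_zero_iff_of_nonneg fun i _ => abs_nonneg _]
    simpa [funext_iff] using hv0
  refine ⟨fun i => mul_nonneg (inv_nonneg.2 (l1_nonneg v)) (hv i), ?_⟩
  simp only [nrm, Pi.smul_apply, smul_eq_mul, ← mul_sum, ← hl1, inv_mul_cancel₀ hl1_ne]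

theorem nrm_pos {v : Fin d → ℝ} (hv : ∀ i, 0 < v i) (i : Fin d) : 0 < nrm v i :=
  mul_pos (inv_pos.2 (sum_pos (fun j _ => abs_pos.2 (hv j).ne') ⟨i, mem_univ i⟩)) (hv i)

theorem CrossRatioLE.nrm {R : ℝ} {v w : Fin d → ℝ} (h : CrossRatioLE R v w) :
    CrossRatioLE R (nrm v) (nrm w) :=
  h.smul (inv_nonneg.2 (l1_nonneg v)) (inv_nonneg.2 (l1_nonneg w))

theorem l1_sub_le_of_crossRatioLE {R : ℝ} {w z : Fin d → ℝ} (h : CrossRatioLE R w z)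
    (hw : probVec w) (hz : probVec z) : l1 (w - z) ≤ 2 * (R - 1) := by
  have hwz := h.le_mul_apply hw.2 hz.2
  have hzw := h.symm.le_mul_apply hz.2 hw.2
  have hR : 1 ≤ R := by
    simpa only [← mul_sum, hw.2, hz.2, mul_one] using sum_le_sum fun i (_ : i ∈ univ) => hwz i
  calc l1 (w - z) ≤ ∑ i, (R - 1) * (w i + z i) := sum_le_sum fun i _ => abs_sub_le_iff.2
        ⟨by nlinarith [hwz i, hw.1 i], by nlinarith [hzw i, hz.1 i]⟩
    _ = 2 * (R - 1) := by rw [← mul_sum, sum_add_distrib, hw.2, hz.2]; ring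

end Simplex

section ContractionCoefficient

variable {d₁ d₂ : ℕ}

theorem tauC_nonneg (A : Matrix (Fin d₁) (Fin d₂) ℝ) : 0 ≤ tauC A := by
  unfold tauC
  split_ifs
  · exact zero_le_one
  · rw [tanh_eq_sinh_div_cosh]
    exact div_nonneg (sinh_nonneg_iff.2 (by positivity)) (cosh_pos _).le

theorem tauC_le_one (A : Matrix (Fin d₁) (Fin d₂) ℝ) : tauC A ≤ 1 := by
  unfold tauC
  split_ifs
  exacts [le_rfl, (tanh_lt_one _).le]

theorem exp_le_sq_of_tanh_le {x γ : ℝ} (h : tanh (x / 4) ≤ γ) (hγ : γ < 1) :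
    exp x ≤ ((1 + γ) / (1 - γ)) ^ 2 := by
  have htanh : tanh (x / 4) = (exp (x / 2) - 1) / (exp (x / 2) + 1) := by
    rw [tanh_eq, show x / 2 = x / 4 + x / 4 by ring, exp_add, exp_neg]
    field_simp
  rw [htanh, div_le_iff₀ (by positivity)] at h
  have hx : exp (x / 2) ≤ (1 + γ) / (1 - γ) := by
    rw [le_div_iff₀ (by linarith)]
    linarith
  calc exp x = exp (x / 2) ^ 2 := by rw [← exp_nat_mul]; ring_nf
    _ ≤ _ := by gcongr

theorem crossRatioLE_of_tauC_le {A : Matrix (Fin d₁) (Fin d₂) ℝ} {γ : ℝ} (hA : ∀ i j, 0 < A i j)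
    (hτ : tauC A ≤ γ) (hγ : γ < 1) (i k : Fin d₁) :
    CrossRatioLE (((1 + γ) / (1 - γ)) ^ 2) (A i) (A k) := by
  intro j l
  set S : Set ℝ := {x | ∃ i k j l, A i j ≠ 0 ∧ A k j ≠ 0 ∧ A i l ≠ 0 ∧ A k l ≠ 0 ∧
      x = log (A i j * A k l / (A k j * A i l))}
  have hS : BddAbove S := by
    refine (Set.finite_range fun p : (Fin d₁ × Fin d₁) × Fin d₂ × Fin d₂ =>
      log (A p.1.1 p.2.1 * A p.1.2 p.2.2 / (A p.1.2 p.2.1 * A p.1.1 p.2.2))).bddAbove.mono ?_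
    rintro _ ⟨i, k, j, l, -, -, -, -, rfl⟩
    exact ⟨((i, k), (j, l)), rfl⟩
  have hH : satH A :=
    ⟨Set.univ, Set.univ, ⟨i, trivial⟩, ⟨j, trivial⟩, fun i j => by simp [(hA i j).ne']⟩
  have hδ : tanh (max (sSup S) 0 / 4) ≤ γ := by
    simpa only [tauC, deltaC, if_pos hH, ENNReal.ofReal_ne_top, if_false,
      ENNReal.toReal_ofReal'] using hτ
  have hlog : log (A i j * A k l / (A k j * A i l)) ≤ max (sSup S) 0 :=
    (le_csSup hS ⟨i, k, j, l, (hA i j).ne', (hA k j).ne', (hA i l).ne', (hA k l).ne', rfl⟩).trans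
      (le_max_left _ _)
  have hden : 0 < A k j * A i l := mul_pos (hA k j) (hA i l)
  rw [log_le_iff_le_exp (div_pos (mul_pos (hA i j) (hA k l)) hden), div_le_iff₀ hden] at hlog
  exact hlog.trans (mul_le_mul_of_nonneg_right (exp_le_sq_of_tanh_le hδ hγ) hden.le)

end ContractionCoefficient

section Products

variable {d : ℕ} {A : ℕ → Matrix (Fin d) (Fin d) ℝ} {q : ℝ}

theorem crossRatioLE_nrm_blockProd_mulVec (hq : 1 ≤ q)
    (hpos : ∀ s, 1 ≤ s → ∀ i j, 0 < A s i j)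
    (hcross : ∀ s, 1 ≤ s → ∀ i k, CrossRatioLE (q ^ 2) (A s i) (A s k)) {n n' : ℕ}
    (hnn' : n ≤ n') {x y : Fin d → ℝ} (hx : 0 ≤ x) (hx0 : x ≠ 0) (hy : 0 ≤ y) (hy0 : y ≠ 0) :
    CrossRatioLE (1 + (q + 1) ^ 2 * ((q - 1) / (q + 1)) ^ (n + 1))
      (nrm (blockProd A 0 (n + 1) *ᵥ x)) (nrm (blockProd A 0 (n' + 1) *ᵥ y)) := by
  obtain ⟨hy', hy'0⟩ : 0 ≤ blockProd A (n + 1) (n' + 1) *ᵥ y ∧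
      blockProd A (n + 1) (n' + 1) *ᵥ y ≠ 0 := by
    rcases hnn'.eq_or_lt with rfl | hlt
    · simpa only [blockProd_self, one_mulVec] using ⟨hy, hy0⟩
    · have h := mulVec_pos_of_pos (blockProd_pos hpos (by omega : n + 1 < n' + 1)) hy hy0
      obtain ⟨j, -⟩ := Function.ne_iff.1 hy0
      exact ⟨fun i => (h i).le, fun h0 => (h j).ne' (congrFun h0 j)⟩
  have h := crossRatioLE_blockProd_mulVec hq hpos hcross n 0 hx hx0 hy' hy'0
  rw [zero_add, mulVec_mulVec, blockProd_mul_blockProd A (by omega) (by omega)] at h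
  exact h.nrm

theorem exists_l1_nrm_blockProd_mulVec_sub_le (hd : 1 ≤ d) (hq : 1 ≤ q)
    (hpos : ∀ s, 1 ≤ s → ∀ i j, 0 < A s i j)
    (hcross : ∀ s, 1 ≤ s → ∀ i k, CrossRatioLE (q ^ 2) (A s i) (A s k)) :
    ∃ Xs : Fin d → ℝ, probVec Xs ∧ (∀ i, 0 < Xs i) ∧ ∀ x : Fin d → ℝ, 0 ≤ x → x ≠ 0 →
      ∀ n : ℕ, l1 (nrm (blockProd A 0 (n + 1) *ᵥ x) - Xs) ≤
        2 * (q + 1) ^ 2 * ((q - 1) / (q + 1)) ^ (n + 1) := by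
  have : NeZero d := ⟨by omega⟩
  set τ := (q - 1) / (q + 1)
  have hP : ∀ n x, 0 ≤ x → x ≠ 0 → ∀ i, 0 < (blockProd A 0 (n + 1) *ᵥ x) i :=
    fun n x hx hx0 => mulVec_pos_of_pos (blockProd_pos hpos n.succ_pos) hx hx0
  have hPprob : ∀ n x, 0 ≤ x → x ≠ 0 → probVec (nrm (blockProd A 0 (n + 1) *ᵥ x)) :=
    fun n x hx hx0 => probVec_nrm (fun i => (hP n x hx hx0 i).le)
      fun h => (hP n x hx hx0 0).ne' (congrFun h 0)
  set W : ℕ → Fin d → ℝ := fun k => nrm (blockProd A 0 (k + 1) *ᵥ 1)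
  have hW : ∀ n k, n ≤ k → ∀ x, 0 ≤ x → x ≠ 0 →
      CrossRatioLE (1 + (q + 1) ^ 2 * τ ^ (n + 1)) (nrm (blockProd A 0 (n + 1) *ᵥ x)) (W k) :=
    fun n k hnk x hx hx0 =>
      crossRatioLE_nrm_blockProd_mulVec hq hpos hcross hnk hx hx0 zero_le_one one_ne_zero
  have hl1 : ∀ n k, n ≤ k → ∀ x, 0 ≤ x → x ≠ 0 →
      l1 (nrm (blockProd A 0 (n + 1) *ᵥ x) - W k) ≤ 2 * (q + 1) ^ 2 * τ ^ (n + 1) :=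
    fun n k hnk x hx hx0 => (l1_sub_le_of_crossRatioLE (hW n k hnk x hx hx0)
      (hPprob n x hx hx0) (hPprob k 1 zero_le_one one_ne_zero)).trans_eq (by ring)
  obtain ⟨Xs, hXs⟩ : ∃ Xs, Tendsto W atTop (𝓝 Xs) := cauchySeq_tendsto_of_complete <|
    cauchySeq_of_le_geometric τ (2 * (q + 1) ^ 2 * τ) ((div_lt_one (by linarith)).2 (by linarith))
      fun k => (dist_le_l1 _ _).trans
        ((hl1 k (k + 1) k.le_succ 1 zero_le_one one_ne_zero).trans_eq (by ring))
  refine ⟨Xs, isClosed_probVec.mem_of_tendsto hXs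
    (.of_forall fun k => hPprob k 1 zero_le_one one_ne_zero), fun i => ?_, fun x hx hx0 n => ?_⟩
  · have hR : 0 < 1 + (q + 1) ^ 2 * τ ^ (0 + 1) := by positivity
    have hlow : ∀ k, W 0 i / (1 + (q + 1) ^ 2 * τ ^ (0 + 1)) ≤ W k i := fun k => by
      rw [div_le_iff₀ hR, mul_comm]
      exact (hW 0 k k.zero_le 1 zero_le_one one_ne_zero).le_mul_apply
        (hPprob 0 1 zero_le_one one_ne_zero).2 (hPprob k 1 zero_le_one one_ne_zero).2 i
    exact (div_pos (nrm_pos (hP 0 1 zero_le_one one_ne_zero) i) hR).trans_le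
      (ge_of_tendsto' (tendsto_pi_nhds.1 hXs i) hlow)
  · exact le_of_tendsto ((continuous_l1.tendsto _).comp (tendsto_const_nhds.sub hXs))
      ((eventually_ge_atTop n).mono fun k hk => hl1 n k hk x hx hx0)

end Products

/-- **Proposition 4.2.** If all the `A n` have positive entries and
`γ := sup_n τ(A n) < 1`, then there are a positive probability vector `X*` and
`C > 0` such that `‖P n X/‖P n X‖ − X*‖ ≤ C·γ^n` for every `X ∈ S_d` and `n ≥ 1`. -/
theorem positive_matrices_contraction {d : ℕ} (hd : 1 ≤ d)
    (A : ℕ → Matrix (Fin d) (Fin d) ℝ)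
    (hpos : ∀ n, 1 ≤ n → ∀ i j, 0 < A n i j)
    (hγ : (⨆ n : ℕ, tauC (A (n + 1))) < 1) :
    ∃ (Xs : Fin d → ℝ) (C : ℝ), probVec Xs ∧ (∀ i, 0 < Xs i) ∧ 0 < C ∧
      ∀ X : Fin d → ℝ, probVec X → ∀ n : ℕ, 1 ≤ n →
        l1 (nrm (blockProd A 0 n *ᵥ X) - Xs) ≤ C * (⨆ n : ℕ, tauC (A (n + 1))) ^ n := by
  set γ := ⨆ n : ℕ, tauC (A (n + 1))
  have hτγ : ∀ s, 1 ≤ s → tauC (A s) ≤ γ := fun s hs => by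
    obtain ⟨n, rfl⟩ := Nat.exists_eq_add_of_le' hs
    exact le_ciSup (f := fun n => tauC (A (n + 1)))
      ⟨1, Set.forall_mem_range.2 fun n => tauC_le_one _⟩ n
  have hγ0 : 0 ≤ γ := (tauC_nonneg _).trans (hτγ 1 le_rfl)
  have hq : 1 ≤ (1 + γ) / (1 - γ) := (one_le_div (by linarith)).2 (by linarith)
  have hqγ : ((1 + γ) / (1 - γ) - 1) / ((1 + γ) / (1 - γ) + 1) = γ := by
    have : 1 - γ ≠ 0 := by linarith
    field_simp
    ring
  obtain ⟨Xs, hXs, hXs_pos, hconv⟩ := exists_l1_nrm_blockProd_mulVec_sub_le hd hq hpos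
    fun s hs => crossRatioLE_of_tauC_le (hpos s hs) (hτγ s hs) hγ
  refine ⟨Xs, 2 * ((1 + γ) / (1 - γ) + 1) ^ 2, hXs, hXs_pos, by nlinarith, fun X hX n hn => ?_⟩
  obtain ⟨n, rfl⟩ := Nat.exists_eq_add_of_le' hn
  simpa only [hqγ] using hconv X hX.1 (probVec_ne_zero hX) n
end

section
/- Suppose the maps ω ↦ Π_n(ω,R) converge uniformly on Ω_R, as n → +∞, to a map V : Ω_R → S_d; suppose A(i)·V(ω) ≠ 0 for every i ∈ {0,…,a} and every ω ∈ Ω_R; suppose (A(0)+⋯+A(a))·R = R; and let L ∈ ℝ^d be a column vector with all entries positive and L^T·R = 1. Then: (1) the potentials φ_n(ω) := log( L^T A(ω_1⋯ω_n) R / L^T A(ω_2⋯ω_n) R ) converge uniformly on Ω_R to φ(ω) := log( L^T A(ω_1) V(σ·ω) / L^T V(σ·ω) ); (2) consequently, if μ is a Borel probability measure on {0,…,a}^ℕ satisfying μ[w_1⋯w_n] = L^T A(w_1⋯w_n) R for every finite word w_1⋯w_n, then μ is a weak Gibbs measure for φ: there exist constants K_n > 0 with (1/n)·log K_n → 0 such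 that K_n^{-1} ≤ μ[ω_1⋯ω_n] / exp( Σ_{k=0}^{n−1} φ(σ^k·ω) ) ≤ K_n for every ω ∈ Ω_R and n ≥ 1. -/
open Matrix Filter Finset Topology MeasureTheory

/-- `A(ω_1 ⋯ ω_n) = A(ω_1) * ⋯ * A(ω_n)`. -/
noncomputable def wordProd {d a : ℕ} (A : Fin (a + 1) → Matrix (Fin d) (Fin d) ℝ)
    (ω : ℕ → Fin (a + 1)) (n : ℕ) : Matrix (Fin d) (Fin d) ℝ :=
  ((List.range n).map fun k => A (ω k)).prod

/-- `Ω_R` : the set of sequences `ω` such that `A(ω_1⋯ω_n) R ≠ 0` for every `n ≥ 1`. -/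
def OmegaR {d a : ℕ} (A : Fin (a + 1) → Matrix (Fin d) (Fin d) ℝ) (R : Fin d → ℝ) :
    Set (ℕ → Fin (a + 1)) :=
  {ω | ∀ n, 1 ≤ n → wordProd A ω n *ᵥ R ≠ 0}

/-- The cylinder set `[ω_1 ⋯ ω_n]`. -/
def cylSet {α : Type*} (ω : ℕ → α) (n : ℕ) : Set (ℕ → α) := {ξ | ∀ k < n, ξ k = ω k}

/-!
For `n ≥ 1` the `n`-step potential at `ω` only sees `ω 0` and the normalized vector
`Π_{n-1}(σω, R)`: it equals `log (Lᵀ A(ω 0) Π / Lᵀ Π)`, the scalar `‖A(σω ⋯) R‖` cancelling.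
Since `Π_{n-1}(σω, R) → V(σω)` uniformly, and `Lᵀ A(ω 0) V(σω)`, `Lᵀ V(σω)` are continuous and
positive on the compact set `Ω_R`, hence bounded below, uniform continuity of `log` away from `0`
gives (1).

For (2), `Lᵀ R = 1` makes `log μ[ω_1⋯ω_n] = log Lᵀ A(ω_1⋯ω_n) R` telescope into
`∑_{k<n} φ_{n-k}(σᵏω)`, so it differs from the Birkhoff sum of `φ` by at most `∑_{m ≤ n} D_m`,
where `D_m = sup_{Ω_R} |φ_m - φ| → 0`; take `K_n = exp ∑_{m ≤ n} D_m`, and `log K_n / n → 0` by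
Cesàro. Each `φ_m` depends on finitely many coordinates, so it is bounded and `D_m` is finite.
-/

section Vectors

variable {m n : Type*} [Fintype n]

lemma mulVec_nonneg_of_nonneg {M : Matrix m n ℝ} (hM : ∀ p q, 0 ≤ M p q) {v : n → ℝ}
    (hv : 0 ≤ v) : 0 ≤ M *ᵥ v := fun p =>
  Finset.sum_nonneg fun q _ => mul_nonneg (hM p q) (hv q)

lemma dotProduct_pos_of_pos_of_nonneg {L v : n → ℝ} (hL : ∀ i, 0 < L i) (hv : 0 ≤ v)
    (hv0 : v ≠ 0) : 0 < L ⬝ᵥ v := by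
  obtain ⟨i, hi⟩ := Function.ne_iff.1 hv0
  exact Finset.sum_pos' (fun j _ => mul_nonneg (hL j).le (hv j))
    ⟨i, Finset.mem_univ i, mul_pos (hL i) ((hv i).lt_of_ne' hi)⟩

protected lemma ContinuousOn.dotProduct {X : Type*} [TopologicalSpace X] {f g : X → n → ℝ}
    {s : Set X} (hf : ContinuousOn f s) (hg : ContinuousOn g s) :
    ContinuousOn (fun x => f x ⬝ᵥ g x) s :=
  (continuous_fst.dotProduct continuous_snd).comp_continuousOn (hf.prodMk hg)

end Vectors

lemma abs_dotProduct_le_l1_mul_norm {d : ℕ} (ℓ v : Fin d → ℝ) : |ℓ ⬝ᵥ v| ≤ l1 ℓ * ‖v‖ :=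
  calc |ℓ ⬝ᵥ v| ≤ ∑ i, |ℓ i * v i| := Finset.abs_sum_le_sum_abs _ _
    _ ≤ ∑ i, |ℓ i| * ‖v‖ := Finset.sum_le_sum fun i _ => by
        rw [abs_mul, ← Real.norm_eq_abs (v i)]
        exact mul_le_mul_of_nonneg_left (norm_le_pi_norm v i) (abs_nonneg _)
    _ = l1 ℓ * ‖v‖ := by rw [l1, Finset.sum_mul]

lemma nrm_nonneg {d : ℕ} {v : Fin d → ℝ} (hv : 0 ≤ v) : 0 ≤ nrm v :=
  smul_nonneg (inv_nonneg.2 (Finset.sum_nonneg fun i _ => abs_nonneg (v i))) hv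

lemma dotProduct_nrm_div_dotProduct_nrm {d : ℕ} (ℓ L v : Fin d → ℝ) :
    ℓ ⬝ᵥ nrm v / (L ⬝ᵥ nrm v) = ℓ ⬝ᵥ v / (L ⬝ᵥ v) := by
  by_cases hv : l1 v = 0
  · have : v = 0 := funext fun i => abs_eq_zero.1
      ((Finset.sum_eq_zero_iff_of_nonneg fun j _ => abs_nonneg (v j)).1 hv i (Finset.mem_univ i))
    simp [this, nrm]
  · simp only [nrm, dotProduct_smul, smul_eq_mul]
    exact mul_div_mul_left _ _ (inv_ne_zero hv)

lemma Real.lipschitzOnWith_log_Ici {c : ℝ} (hc : 0 < c) :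
    LipschitzOnWith (Real.toNNReal c⁻¹) Real.log (Set.Ici c) := by
  refine (convex_Ici c).lipschitzOnWith_of_nnnorm_deriv_le
    (fun x hx => Real.differentiableAt_log (hc.trans_le hx).ne') fun x hx => ?_
  have hx0 : 0 < x := hc.trans_le hx
  rw [Real.deriv_log, ← NNReal.coe_le_coe, coe_nnnorm, Real.coe_toNNReal _ (by positivity),
    Real.norm_eq_abs, abs_of_pos (inv_pos.2 hx0)]
  exact inv_anti₀ hc hx

lemma inv_exp_le_div_exp_and_div_exp_le {x S B : ℝ} (hx : 0 < x) (h : |Real.log x - S| ≤ B) :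
    (Real.exp B)⁻¹ ≤ x / Real.exp S ∧ x / Real.exp S ≤ Real.exp B := by
  rw [← Real.exp_neg, ← Real.exp_log hx, ← Real.exp_sub, Real.exp_le_exp, Real.exp_le_exp]
  exact ⟨by linarith [neg_abs_le (Real.log x - S)], (le_abs_self _).trans h⟩

section UniformLimits

variable {ι α : Type*} {p : Filter ι} {s : Set α}

lemma TendstoUniformlyOn.dotProduct_left {d : ℕ} {F : ι → α → Fin d → ℝ} {f : α → Fin d → ℝ}
    {ℓ : α → Fin d → ℝ} {C : ℝ} (hℓ : ∀ x ∈ s, l1 (ℓ x) ≤ C)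
    (h : TendstoUniformlyOn F f p s) :
    TendstoUniformlyOn (fun n x => ℓ x ⬝ᵥ F n x) (fun x => ℓ x ⬝ᵥ f x) p s := by
  rw [Metric.tendstoUniformlyOn_iff] at h ⊢
  intro ε hε
  filter_upwards [h (ε / (|C| + 1)) (by positivity)] with n hn x hx
  rw [Real.dist_eq, ← dotProduct_sub]
  calc |ℓ x ⬝ᵥ (f x - F n x)| ≤ l1 (ℓ x) * dist (f x) (F n x) := by
        rw [dist_eq_norm]; exact abs_dotProduct_le_l1_mul_norm _ _
    _ ≤ (|C| + 1) * dist (f x) (F n x) :=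
        mul_le_mul_of_nonneg_right (by linarith [hℓ x hx, le_abs_self C]) dist_nonneg
    _ < (|C| + 1) * (ε / (|C| + 1)) := mul_lt_mul_of_pos_left (hn x hx) (by positivity)
    _ = ε := by field_simp

lemma TendstoUniformlyOn.eventually_forall_half_le {G : ι → α → ℝ} {g : α → ℝ} {c : ℝ}
    (hc : 0 < c) (h : TendstoUniformlyOn G g p s) (hg : ∀ x ∈ s, c ≤ g x) :
    ∀ᶠ n in p, ∀ x ∈ s, c / 2 ≤ G n x := by
  filter_upwards [h.neg.eventually_forall_lt (neg_lt_neg (half_lt_self hc))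
    fun x hx => neg_le_neg (hg x hx)] with n hn x hx
  linarith [hn x hx, show (-G) n x = -G n x from rfl]

lemma TendstoUniformlyOn.log {G : ι → α → ℝ} {g : α → ℝ} {c : ℝ} (hc : 0 < c)
    (h : TendstoUniformlyOn G g p s) (hg : ∀ x ∈ s, c ≤ g x) :
    TendstoUniformlyOn (fun n x => Real.log (G n x)) (fun x => Real.log (g x)) p s :=
  UniformContinuousOn.comp_tendstoUniformlyOn_eventually (h.eventually_forall_half_le hc hg)
    (fun x hx => Set.mem_Ici.2 (by linarith [hg x hx]))
    (Real.lipschitzOnWith_log_Ici (half_pos hc)).uniformContinuousOn h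

lemma TendstoUniformlyOn.log_div {G₁ G₂ : ι → α → ℝ} {g₁ g₂ : α → ℝ} {c₁ c₂ : ℝ}
    (hc₁ : 0 < c₁) (hc₂ : 0 < c₂) (h₁ : TendstoUniformlyOn G₁ g₁ p s)
    (h₂ : TendstoUniformlyOn G₂ g₂ p s) (hg₁ : ∀ x ∈ s, c₁ ≤ g₁ x) (hg₂ : ∀ x ∈ s, c₂ ≤ g₂ x) :
    TendstoUniformlyOn (fun n x => Real.log (G₁ n x / G₂ n x)) (fun x => Real.log (g₁ x / g₂ x))
      p s := by
  refine ((h₁.log hc₁ hg₁).sub (h₂.log hc₂ hg₂)).congr ?_ |>.congr_right fun x hx => ?_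
  · filter_upwards [h₁.eventually_forall_half_le hc₁ hg₁, h₂.eventually_forall_half_le hc₂ hg₂]
      with n hn₁ hn₂ x hx
    have h₁ : 0 < G₁ n x := by linarith [hn₁ x hx]
    have h₂ : 0 < G₂ n x := by linarith [hn₂ x hx]
    simp only [Pi.sub_apply, Real.log_div h₁.ne' h₂.ne']
  · have h₁ : 0 < g₁ x := by linarith [hg₁ x hx]
    have h₂ : 0 < g₂ x := by linarith [hg₂ x hx]
    simp only [Pi.sub_apply, Real.log_div h₁.ne' h₂.ne']

lemma TendstoUniformlyOn.exists_tendsto_zero_bound {F : ℕ → α → ℝ} {f : α → ℝ}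
    (h : TendstoUniformlyOn F f atTop s)
    (hF : ∀ n, BddAbove ((fun x => |F n x|) '' s)) :
    ∃ D : ℕ → ℝ, Tendsto D atTop (𝓝 0) ∧ ∀ n, ∀ x ∈ s, |F n x - f x| ≤ D n := by
  rw [Metric.tendstoUniformlyOn_iff] at h
  obtain ⟨N, hN⟩ := eventually_atTop.1 (h 1 one_pos)
  have hbdd : ∀ n, BddAbove (Set.range fun x : s => |F n x - f x|) := by
    intro n
    obtain ⟨Cn, hCn⟩ := hF n
    obtain ⟨CN, hCN⟩ := hF N
    refine ⟨Cn + (CN + 1), Set.forall_mem_range.2 fun ⟨x, hx⟩ => ?_⟩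
    have hFn := hCn ⟨x, hx, rfl⟩
    have hFN := hCN ⟨x, hx, rfl⟩
    have hfN := hN N le_rfl x hx
    rw [Real.dist_eq] at hfN
    calc |F n x - f x| ≤ |F n x| + |f x| := abs_sub _ _
      _ ≤ |F n x| + (|F N x| + |f x - F N x|) := by
          gcongr; simpa using abs_add_le (F N x) (f x - F N x)
      _ ≤ Cn + (CN + 1) := by simp only at hFn hFN; linarith
  refine ⟨fun n => ⨆ x : s, |F n x - f x|, ?_, fun n x hx => le_ciSup (hbdd n) ⟨x, hx⟩⟩
  rw [Metric.tendsto_atTop]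
  intro ε hε
  obtain ⟨M, hM⟩ := eventually_atTop.1 (h (ε / 2) (half_pos hε))
  refine ⟨M, fun n hn => ?_⟩
  have hle : ⨆ x : s, |F n x - f x| ≤ ε / 2 := Real.iSup_le (fun ⟨x, hx⟩ => by
    rw [abs_sub_comm, ← Real.dist_eq]; exact (hM n hn x hx).le) (half_pos hε).le
  rw [Real.dist_eq, sub_zero, abs_of_nonneg (Real.iSup_nonneg fun _ => abs_nonneg _)]
  linarith

end UniformLimits

section LinearRepresentation

variable {d a : ℕ} (A : Fin (a + 1) → Matrix (Fin d) (Fin d) ℝ) (R : Fin d → ℝ)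

lemma wordProd_zero (ω : ℕ → Fin (a + 1)) : wordProd A ω 0 = 1 := by
  simp [wordProd]

lemma wordProd_succ (ω : ℕ → Fin (a + 1)) (n : ℕ) :
    wordProd A ω (n + 1) = A (ω 0) * wordProd A (fun k => ω (k + 1)) n := by
  simp only [wordProd, List.range_succ_eq_map, List.map_cons, List.map_map, List.prod_cons]
  rfl

lemma wordProd_succ_mulVec (ω : ℕ → Fin (a + 1)) (n : ℕ) :
    wordProd A ω (n + 1) *ᵥ R = A (ω 0) *ᵥ (wordProd A (fun k => ω (k + 1)) n *ᵥ R) := by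
  rw [wordProd_succ, mulVec_mulVec]

lemma continuous_shift {β : Type*} [TopologicalSpace β] :
    Continuous fun (ω : ℕ → β) (k : ℕ) => ω (k + 1) :=
  continuous_pi fun k => continuous_apply (k + 1)

lemma isLocallyConstant_wordProd (n : ℕ) : IsLocallyConstant fun ω => wordProd A ω n := by
  induction n with
  | zero => simpa only [wordProd_zero] using IsLocallyConstant.of_constant _ fun _ _ => rfl
  | succ n ih =>
    simp only [wordProd_succ]
    have hA : IsLocallyConstant fun ω : ℕ → Fin (a + 1) => A (ω 0) :=
      ((IsLocallyConstant.iff_continuous fun ω : ℕ → Fin (a + 1) => ω 0).2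
        (continuous_apply 0)).comp A
    exact hA.mul (ih.comp_continuous continuous_shift)

lemma isCompact_OmegaR : IsCompact (OmegaR A R) := by
  refine IsClosed.isCompact ?_
  have : OmegaR A R = ⋂ n ∈ {n | 1 ≤ n}, {ω | wordProd A ω n *ᵥ R = 0}ᶜ := by
    ext ω; simp [OmegaR]
  rw [this]
  exact isClosed_biInter fun n _ =>
    (((isLocallyConstant_wordProd A n).comp (· *ᵥ R)).isOpen_fiber 0).isClosed_compl

lemma shift_mem_OmegaR {ω : ℕ → Fin (a + 1)} (hω : ω ∈ OmegaR A R) :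
    (fun k => ω (k + 1)) ∈ OmegaR A R := fun n hn h0 =>
  hω (n + 1) (by omega) (by rw [wordProd_succ_mulVec, h0, mulVec_zero])

lemma comp_add_mem_OmegaR {ω : ℕ → Fin (a + 1)} (hω : ω ∈ OmegaR A R) (k : ℕ) :
    (fun i => ω (i + k)) ∈ OmegaR A R := by
  induction k with
  | zero => simpa using hω
  | succ k ih => simpa only [add_right_comm _ 1 k, add_assoc] using shift_mem_OmegaR A R ih

variable {A R}

lemma wordProd_mulVec_nonneg (hA : ∀ i p q, 0 ≤ A i p q) (hR : 0 ≤ R) (n : ℕ)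
    (ω : ℕ → Fin (a + 1)) : 0 ≤ wordProd A ω n *ᵥ R := by
  induction n generalizing ω with
  | zero => simpa [wordProd_zero] using hR
  | succ n ih =>
    rw [wordProd_succ_mulVec]
    exact mulVec_nonneg_of_nonneg (hA _) (ih _)

lemma wordProd_mulVec_ne_zero (hR : R ≠ 0) {ω : ℕ → Fin (a + 1)} (hω : ω ∈ OmegaR A R)
    (n : ℕ) : wordProd A ω n *ᵥ R ≠ 0 := by
  rcases Nat.eq_zero_or_pos n with rfl | hn
  · simpa [wordProd_zero] using hR
  · exact hω n hn

end LinearRepresentation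

section Potentials

variable {d a : ℕ} (A : Fin (a + 1) → Matrix (Fin d) (Fin d) ℝ) (R L : Fin d → ℝ)

/-- The paper's `φ_n`; `limitPotential A L V` below is its `φ`. Sequences are indexed from `0`,
so `ω 0` is the paper's `ω_1`. -/
noncomputable def stepPotential (n : ℕ) (ω : ℕ → Fin (a + 1)) : ℝ :=
  Real.log ((L ⬝ᵥ (wordProd A ω n *ᵥ R)) /
    (L ⬝ᵥ (wordProd A (fun k => ω (k + 1)) (n - 1) *ᵥ R)))

noncomputable def limitPotential (V : (ℕ → Fin (a + 1)) → Fin d → ℝ) (ω : ℕ → Fin (a + 1)) : ℝ :=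
  Real.log ((L ⬝ᵥ (A (ω 0) *ᵥ V fun k => ω (k + 1))) / (L ⬝ᵥ V fun k => ω (k + 1)))

variable {A R L}

theorem tendstoUniformlyOn_stepPotential (hA : ∀ i p q, 0 ≤ A i p q) (hR : 0 ≤ R)
    {V : (ℕ → Fin (a + 1)) → Fin d → ℝ}
    (hunif : TendstoUniformlyOn (fun n ω => nrm (wordProd A ω n *ᵥ R)) V atTop (OmegaR A R))
    (hAV : ∀ i, ∀ ω ∈ OmegaR A R, A i *ᵥ V ω ≠ 0) (hL : ∀ i, 0 < L i) :
    TendstoUniformlyOn (stepPotential A R L) (limitPotential A L V) atTop (OmegaR A R) := by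
  set σ : (ℕ → Fin (a + 1)) → ℕ → Fin (a + 1) := fun ω k => ω (k + 1) with hσ
  have hσΩ : ∀ ω ∈ OmegaR A R, σ ω ∈ OmegaR A R := fun ω hω => shift_mem_OmegaR A R hω
  have hVc : ContinuousOn V (OmegaR A R) := hunif.continuousOn <| Frequently.of_forall fun n =>
    ((isLocallyConstant_wordProd A n).comp fun M => nrm (M *ᵥ R)).continuous.continuousOn
  have hV0 : ∀ ω ∈ OmegaR A R, 0 ≤ V ω := fun ω hω =>
    (isClosed_le continuous_const continuous_id).mem_of_tendsto (hunif.tendsto_at hω)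
      (Eventually.of_forall fun n => nrm_nonneg (wordProd_mulVec_nonneg hA hR n ω))
  have hW : TendstoUniformlyOn (fun n ω => nrm (wordProd A (σ ω) (n - 1) *ᵥ R))
      (fun ω => V (σ ω)) atTop (OmegaR A R) :=
    ((hunif.comp σ).mono hσΩ).seq_tendstoUniformlyOn _ (tendsto_sub_atTop_nat 1)
  set ℓ : (ℕ → Fin (a + 1)) → Fin d → ℝ := fun ω => vecMul L (A (ω 0)) with hℓ
  obtain ⟨C, hC⟩ := (Set.finite_range fun i => l1 (vecMul L (A i))).bddAbove
  have hVσ : ContinuousOn (fun ω => V (σ ω)) (OmegaR A R) :=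
    hVc.comp continuous_shift.continuousOn hσΩ
  have hℓc : Continuous ℓ :=
    (continuous_of_discreteTopology (f := fun i => vecMul L (A i))).comp (continuous_apply 0)
  have hℓV : ContinuousOn (fun ω => ℓ ω ⬝ᵥ V (σ ω)) (OmegaR A R) :=
    hℓc.continuousOn.dotProduct hVσ
  have hLV : ContinuousOn (fun ω => L ⬝ᵥ V (σ ω)) (OmegaR A R) :=
    continuousOn_const.dotProduct hVσ
  obtain ⟨c₁, hc₁, hc₁V⟩ := (isCompact_OmegaR A R).exists_forall_le' hℓV fun ω hω => by
    rw [hℓ, ← dotProduct_mulVec]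
    exact dotProduct_pos_of_pos_of_nonneg hL (mulVec_nonneg_of_nonneg (hA _) (hV0 _ (hσΩ ω hω)))
      (hAV _ _ (hσΩ ω hω))
  obtain ⟨c₂, hc₂, hc₂V⟩ := (isCompact_OmegaR A R).exists_forall_le' hLV fun ω hω =>
    dotProduct_pos_of_pos_of_nonneg hL (hV0 _ (hσΩ ω hω))
      fun h => hAV 0 _ (hσΩ ω hω) (by rw [h, mulVec_zero])
  refine (((hW.dotProduct_left fun ω _ => hC ⟨ω 0, rfl⟩).log_div hc₁ hc₂
    (hW.dotProduct_left (C := l1 L) fun _ _ => le_rfl) hc₁V hc₂V).congr ?_).congr_right ?_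
  · filter_upwards [eventually_ge_atTop 1] with n hn ω hω
    obtain ⟨m, rfl⟩ : ∃ m, n = m + 1 := ⟨n - 1, by omega⟩
    simp only [stepPotential, dotProduct_nrm_div_dotProduct_nrm, wordProd_succ_mulVec, hℓ,
      dotProduct_mulVec, Nat.add_sub_cancel, hσ]
  · intro ω _
    simp only [limitPotential, hℓ, dotProduct_mulVec, hσ]

end Potentials

section WeakGibbs

variable {d a : ℕ} {A : Fin (a + 1) → Matrix (Fin d) (Fin d) ℝ} {R L : Fin d → ℝ}

lemma isLocallyConstant_stepPotential (n : ℕ) : IsLocallyConstant (stepPotential A R L n) :=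
  ((isLocallyConstant_wordProd A n).prodMk
    ((isLocallyConstant_wordProd A (n - 1)).comp_continuous continuous_shift)).comp
    fun M => Real.log (L ⬝ᵥ (M.1 *ᵥ R) / (L ⬝ᵥ (M.2 *ᵥ R)))

lemma bddAbove_abs_stepPotential (n : ℕ) (s : Set (ℕ → Fin (a + 1))) :
    BddAbove ((fun ω => |stepPotential A R L n ω|) '' s) :=
  ((isLocallyConstant_stepPotential n).comp abs).range_finite.bddAbove.mono
    (Set.image_subset_range _ _)

lemma dotProduct_wordProd_mulVec_pos (hA : ∀ i p q, 0 ≤ A i p q) (hR : 0 ≤ R) (hR0 : R ≠ 0)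
    (hL : ∀ i, 0 < L i) {ω : ℕ → Fin (a + 1)} (hω : ω ∈ OmegaR A R) (n : ℕ) :
    0 < L ⬝ᵥ (wordProd A ω n *ᵥ R) :=
  dotProduct_pos_of_pos_of_nonneg hL (wordProd_mulVec_nonneg hA hR n ω)
    (wordProd_mulVec_ne_zero hR0 hω n)

lemma log_dotProduct_wordProd_mulVec_eq_sum (hA : ∀ i p q, 0 ≤ A i p q) (hR : 0 ≤ R)
    (hL : ∀ i, 0 < L i) (hLR : L ⬝ᵥ R = 1) {ω : ℕ → Fin (a + 1)} (hω : ω ∈ OmegaR A R)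
    (n : ℕ) :
    Real.log (L ⬝ᵥ (wordProd A ω n *ᵥ R)) =
      ∑ k ∈ Finset.range n, stepPotential A R L (n - k) fun i => ω (i + k) := by
  have hR0 : R ≠ 0 := fun h => by simp [h] at hLR
  have hpos : ∀ k m, 0 < L ⬝ᵥ (wordProd A (fun i => ω (i + k)) m *ᵥ R) := fun k =>
    dotProduct_wordProd_mulVec_pos hA hR hR0 hL (comp_add_mem_OmegaR A R hω k)
  set G : ℕ → ℝ := fun k => Real.log (L ⬝ᵥ (wordProd A (fun i => ω (i + k)) (n - k) *ᵥ R))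
  calc Real.log (L ⬝ᵥ (wordProd A ω n *ᵥ R)) = G 0 - G n := by
        simp [G, wordProd_zero, hLR]
    _ = ∑ k ∈ Finset.range n, (G k - G (k + 1)) := (Finset.sum_range_sub' G n).symm
    _ = _ := Finset.sum_congr rfl fun k _ => by
        rw [stepPotential, Real.log_div (hpos _ _).ne']
        · simp only [G, Nat.sub_sub, add_right_comm _ 1 k, add_assoc]
        · simpa only [add_right_comm _ 1 k, add_assoc] using (hpos (k + 1) (n - k - 1)).ne'

lemma limitPotential_comp_add (V : (ℕ → Fin (a + 1)) → Fin d → ℝ) (ω : ℕ → Fin (a + 1))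
    (k : ℕ) : limitPotential A L V (fun i => ω (i + k)) =
      Real.log ((L ⬝ᵥ (A (ω k) *ᵥ V fun i => ω (i + k + 1))) /
        (L ⬝ᵥ V fun i => ω (i + k + 1))) := by
  simp only [limitPotential, zero_add, add_right_comm _ 1 k]

end WeakGibbs

theorem linRep_weakGibbs_general {d a : ℕ}
    (A : Fin (a + 1) → Matrix (Fin d) (Fin d) ℝ)
    (hnn : ∀ i p q, 0 ≤ A i p q)
    (R : Fin d → ℝ) (hR : probVec R)
    (Vm : (ℕ → Fin (a + 1)) → (Fin d → ℝ))
    (hunif : TendstoUniformlyOn (fun n ω => nrm (wordProd A ω n *ᵥ R)) Vm atTop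
      (OmegaR A R))
    (hAV : ∀ (i : Fin (a + 1)), ∀ ω ∈ OmegaR A R, A i *ᵥ Vm ω ≠ 0)
    (L : Fin d → ℝ) (hL : ∀ i, 0 < L i) (hLR : L ⬝ᵥ R = 1) :
    -- (1) uniform convergence of the n-step potentials
    TendstoUniformlyOn
      (fun n ω => Real.log ((L ⬝ᵥ (wordProd A ω n *ᵥ R)) /
        (L ⬝ᵥ (wordProd A (fun k => ω (k + 1)) (n - 1) *ᵥ R))))
      (fun ω => Real.log ((L ⬝ᵥ (A (ω 0) *ᵥ Vm fun k => ω (k + 1))) /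
        (L ⬝ᵥ Vm fun k => ω (k + 1))))
      atTop (OmegaR A R) ∧
    -- (2) the weak Gibbs property of the linearly representable measure μ
    (∀ μ : Measure (ℕ → Fin (a + 1)), IsProbabilityMeasure μ →
      (∀ (ω : ℕ → Fin (a + 1)) (n : ℕ), (μ (cylSet ω n)).toReal =
        L ⬝ᵥ (wordProd A ω n *ᵥ R)) →
      ∃ K : ℕ → ℝ, (∀ n, 0 < K n) ∧
        Tendsto (fun n : ℕ => Real.log (K n) / (n : ℝ)) atTop (nhds 0) ∧
        ∀ ω ∈ OmegaR A R, ∀ n : ℕ, 1 ≤ n →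
          (K n)⁻¹ ≤ (μ (cylSet ω n)).toReal /
              Real.exp (∑ k ∈ Finset.range n,
                Real.log ((L ⬝ᵥ (A (ω k) *ᵥ Vm fun i => ω (i + k + 1))) /
                  (L ⬝ᵥ Vm fun i => ω (i + k + 1)))) ∧
            (μ (cylSet ω n)).toReal /
              Real.exp (∑ k ∈ Finset.range n,
                Real.log ((L ⬝ᵥ (A (ω k) *ᵥ Vm fun i => ω (i + k + 1))) /
                  (L ⬝ᵥ Vm fun i => ω (i + k + 1)))) ≤ K n) := by
  have hpot : TendstoUniformlyOn (stepPotential A R L) (limitPotential A L Vm) atTop (OmegaR A R) :=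
    tendstoUniformlyOn_stepPotential hnn hR.1 hunif hAV hL
  refine ⟨hpot, fun μ _ hμ => ?_⟩
  obtain ⟨D, hD, hpotD⟩ := hpot.exists_tendsto_zero_bound fun n => bddAbove_abs_stepPotential n _
  refine ⟨fun n => Real.exp (∑ k ∈ Finset.range n, D (k + 1)), fun n => Real.exp_pos _, ?_,
    fun ω hω n _ => ?_⟩
  · simpa [div_eq_inv_mul] using (hD.comp (tendsto_add_atTop_nat 1)).cesaro
  simp only [← limitPotential_comp_add, hμ]
  refine inv_exp_le_div_exp_and_div_exp_le (dotProduct_wordProd_mulVec_pos hnn hR.1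
    (fun h => by simp [h] at hLR) hL hω n) ?_
  rw [log_dotProduct_wordProd_mulVec_eq_sum hnn hR.1 hL hLR hω, ← Finset.sum_sub_distrib]
  calc _ ≤ ∑ k ∈ Finset.range n, |stepPotential A R L (n - k) (fun i => ω (i + k)) -
        limitPotential A L Vm (fun i => ω (i + k))| := Finset.abs_sum_le_sum_abs _ _
    _ ≤ ∑ k ∈ Finset.range n, D (n - 1 - k + 1) := Finset.sum_le_sum fun k hk => by
        rw [show n - 1 - k + 1 = n - k by have := Finset.mem_range.1 hk; omega]
        exact hpotD _ _ (comp_add_mem_OmegaR A R hω k)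
    _ = ∑ k ∈ Finset.range n, D (k + 1) := Finset.sum_range_reflect (fun k => D (k + 1)) n

/-- **Proposition 6.2.** If `Π_n(·,R)` converges uniformly on `Ω_R` to `V` with
`A(i)·V(ω) ≠ 0` for all `i, ω`, then (1) the `n`-step potentials converge uniformly on
`Ω_R` to `φ(ω) = log (Lᵀ A(ω_1) V(σ·ω) / Lᵀ V(σ·ω))`; and (2) if moreover `A_* R = R`,
`Lᵀ R = 1` and `μ` is the linearly representable measure
`μ[w_1⋯w_n] = Lᵀ A(w_1⋯w_n) R`, then `μ` is a weak Gibbs measure for `φ`. -/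
theorem linRep_weakGibbs {d a : ℕ}
    (A : Fin (a + 1) → Matrix (Fin d) (Fin d) ℝ)
    (hnn : ∀ i p q, 0 ≤ A i p q)
    (R : Fin d → ℝ) (hR : probVec R)
    (Vm : (ℕ → Fin (a + 1)) → (Fin d → ℝ))
    (hunif : TendstoUniformlyOn (fun n ω => nrm (wordProd A ω n *ᵥ R)) Vm atTop
      (OmegaR A R))
    (hAV : ∀ (i : Fin (a + 1)), ∀ ω ∈ OmegaR A R, A i *ᵥ Vm ω ≠ 0)
    (heig : (∑ i, A i) *ᵥ R = R)
    (L : Fin d → ℝ) (hL : ∀ i, 0 < L i) (hLR : L ⬝ᵥ R = 1) :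
    -- (1) uniform convergence of the n-step potentials
    TendstoUniformlyOn
      (fun n ω => Real.log ((L ⬝ᵥ (wordProd A ω n *ᵥ R)) /
        (L ⬝ᵥ (wordProd A (fun k => ω (k + 1)) (n - 1) *ᵥ R))))
      (fun ω => Real.log ((L ⬝ᵥ (A (ω 0) *ᵥ Vm fun k => ω (k + 1))) /
        (L ⬝ᵥ Vm fun k => ω (k + 1))))
      atTop (OmegaR A R) ∧
    -- (2) the weak Gibbs property of the linearly representable measure μ
    (∀ μ : Measure (ℕ → Fin (a + 1)), IsProbabilityMeasure μ →
      (∀ (ω : ℕ → Fin (a + 1)) (n : ℕ), (μ (cylSet ω n)).toReal =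
        L ⬝ᵥ (wordProd A ω n *ᵥ R)) →
      ∃ K : ℕ → ℝ, (∀ n, 0 < K n) ∧
        Tendsto (fun n : ℕ => Real.log (K n) / (n : ℝ)) atTop (nhds 0) ∧
        ∀ ω ∈ OmegaR A R, ∀ n : ℕ, 1 ≤ n →
          (K n)⁻¹ ≤ (μ (cylSet ω n)).toReal /
              Real.exp (∑ k ∈ Finset.range n,
                Real.log ((L ⬝ᵥ (A (ω k) *ᵥ Vm fun i => ω (i + k + 1))) /
                  (L ⬝ᵥ Vm fun i => ω (i + k + 1)))) ∧
            (μ (cylSet ω n)).toReal /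
              Real.exp (∑ k ∈ Finset.range n,
                Real.log ((L ⬝ᵥ (A (ω k) *ᵥ Vm fun i => ω (i + k + 1))) /
                  (L ⬝ᵥ Vm fun i => ω (i + k + 1)))) ≤ K n) :=
  linRep_weakGibbs_general A hnn R hR Vm hunif hAV L hL hLR
end

section
/- The sequence of maps ω ↦ Π_n(ω,R) converges uniformly on Ω_R as n → +∞ if and only if for every ω ∈ Ω_R, lim_{n→+∞} sup{ ‖Π_{n+r}(ξ,R) − Π_n(ξ,R)‖ : ξ ∈ [ω_1⋯ω_n] ∩ Ω_R, r ≥ 0 } = 0. -/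
open Matrix Filter Finset Topology MeasureTheory

lemma L63_l1_nonneg {d : ℕ} (v : Fin d → ℝ) : 0 ≤ l1 v :=
  Finset.sum_nonneg fun _ _ => abs_nonneg _

lemma L63_abs_le_l1 {d : ℕ} (v : Fin d → ℝ) (i : Fin d) : |v i| ≤ l1 v :=
  Finset.single_le_sum (fun j _ => abs_nonneg (v j)) (Finset.mem_univ i)

lemma L63_dist_le_l1 {d : ℕ} (u v : Fin d → ℝ) : dist u v ≤ l1 (u - v) := by
  rw [dist_pi_le_iff (L63_l1_nonneg _)]
  intro i
  rw [Real.dist_eq]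
  exact L63_abs_le_l1 (u - v) i

lemma L63_l1_sub_le_dist {d : ℕ} (u v : Fin d → ℝ) : l1 (u - v) ≤ d * dist u v := by
  have h : ∀ i : Fin d, |u i - v i| ≤ dist u v := fun i => by
    rw [← Real.dist_eq]; exact dist_le_pi_dist u v i
  calc l1 (u - v) = ∑ i, |u i - v i| := rfl
    _ ≤ ∑ _i : Fin d, dist u v := Finset.sum_le_sum fun i _ => h i
    _ = d * dist u v := by simp [mul_comm]

lemma L63_l1_sub_le {d : ℕ} (u v : Fin d → ℝ) : l1 (u - v) ≤ l1 u + l1 v := by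
  unfold l1
  rw [← Finset.sum_add_distrib]
  exact Finset.sum_le_sum fun i _ => abs_sub (u i) (v i)

lemma L63_l1_smul {d : ℕ} (c : ℝ) (v : Fin d → ℝ) : l1 (c • v) = |c| * l1 v := by
  unfold l1
  rw [Finset.mul_sum]
  exact Finset.sum_congr rfl fun i _ => by simp [abs_mul]

lemma L63_wordProd_zero {d a : ℕ} (A : Fin (a+1) → Matrix (Fin d) (Fin d) ℝ) (ω : ℕ → Fin (a+1)) :
    wordProd A ω 0 = 1 := by simp [wordProd]

lemma L63_wordProd_succ {d a : ℕ} (A : Fin (a+1) → Matrix (Fin d) (Fin d) ℝ)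
    (ω : ℕ → Fin (a+1)) (n : ℕ) :
    wordProd A ω (n+1) = wordProd A ω n * A (ω n) := by
  simp [wordProd, List.range_succ]

lemma L63_wordProd_nonneg {d a : ℕ} (A : Fin (a+1) → Matrix (Fin d) (Fin d) ℝ)
    (hnn : ∀ i p q, 0 ≤ A i p q) (ω : ℕ → Fin (a+1)) :
    ∀ n (p q : Fin d), 0 ≤ wordProd A ω n p q := by
  intro n
  induction n with
  | zero => intro p q; rw [L63_wordProd_zero]; by_cases h : p = q <;> simp [Matrix.one_apply, h]
  | succ n ih =>
    intro p q
    rw [L63_wordProd_succ, Matrix.mul_apply]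
    exact Finset.sum_nonneg fun k _ => mul_nonneg (ih p k) (hnn _ k q)

lemma L63_vec_nonneg {d a : ℕ} (A : Fin (a+1) → Matrix (Fin d) (Fin d) ℝ)
    (hnn : ∀ i p q, 0 ≤ A i p q) (R : Fin d → ℝ) (hR : probVec R)
    (ω : ℕ → Fin (a+1)) (n : ℕ) (i : Fin d) :
    0 ≤ (wordProd A ω n *ᵥ R) i := by
  simp only [Matrix.mulVec, dotProduct]
  exact Finset.sum_nonneg fun j _ => mul_nonneg (L63_wordProd_nonneg A hnn ω n i j) (hR.1 j)

lemma L63_l1_P_pos {d a : ℕ} (A : Fin (a+1) → Matrix (Fin d) (Fin d) ℝ)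
    (hnn : ∀ i p q, 0 ≤ A i p q) (R : Fin d → ℝ) (hR : probVec R)
    {ω : ℕ → Fin (a+1)} (hω : ω ∈ OmegaR A R) (n : ℕ) :
    0 < l1 (wordProd A ω n *ᵥ R) := by
  rcases Nat.eq_zero_or_pos n with rfl | hn
  · rw [L63_wordProd_zero, Matrix.one_mulVec]
    have : l1 R = 1 := by
      unfold l1
      rw [Finset.sum_congr rfl fun i _ => abs_of_nonneg (hR.1 i)]
      exact hR.2
    rw [this]; norm_num
  · have h := hω n hn
    obtain ⟨i, hi⟩ := Function.ne_iff.mp h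
    calc (0:ℝ) < |(wordProd A ω n *ᵥ R) i| := abs_pos.mpr hi
      _ ≤ _ := L63_abs_le_l1 _ i

lemma L63_l1_nrm_one {d a : ℕ} (A : Fin (a+1) → Matrix (Fin d) (Fin d) ℝ)
    (hnn : ∀ i p q, 0 ≤ A i p q) (R : Fin d → ℝ) (hR : probVec R)
    {ω : ℕ → Fin (a+1)} (hω : ω ∈ OmegaR A R) (n : ℕ) :
    l1 (nrm (wordProd A ω n *ᵥ R)) = 1 := by
  have hp := L63_l1_P_pos A hnn R hR hω n
  unfold nrm
  rw [L63_l1_smul, abs_of_nonneg (inv_nonneg.mpr hp.le), inv_mul_cancel₀ hp.ne']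

lemma L63_wordProd_congr {d a : ℕ} (A : Fin (a+1) → Matrix (Fin d) (Fin d) ℝ)
    {ξ ω : ℕ → Fin (a+1)} {n : ℕ} (h : ∀ k < n, ξ k = ω k) :
    wordProd A ξ n = wordProd A ω n := by
  unfold wordProd
  congr 1
  apply List.map_congr_left
  intro k hk
  rw [h k (List.mem_range.mp hk)]

lemma L63_cyl_open {a : ℕ} (ω : ℕ → Fin (a+1)) (n : ℕ) :
    IsOpen {ξ : ℕ → Fin (a+1) | ∀ k < n, ξ k = ω k} := by
  have he : {ξ : ℕ → Fin (a+1) | ∀ k < n, ξ k = ω k}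
      = ⋂ k ∈ Finset.range n, {ξ : ℕ → Fin (a+1) | ξ k = ω k} := by
    ext ξ; simp [Finset.mem_range]
  rw [he]
  refine isOpen_biInter_finset fun k _ => ?_
  have : Continuous fun ξ : ℕ → Fin (a+1) => ξ k := continuous_apply k
  exact (isOpen_discrete {ω k}).preimage this

lemma L63_omega_compact {d a : ℕ} (A : Fin (a+1) → Matrix (Fin d) (Fin d) ℝ) (R : Fin d → ℝ) :
    IsCompact (OmegaR A R) := by
  have hc : IsClosed (OmegaR A R) := by
    have he : OmegaR A R = ⋂ n ∈ {n : ℕ | 1 ≤ n},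
        {ω : ℕ → Fin (a+1) | wordProd A ω n *ᵥ R ≠ 0} := by
      ext ω; simp [OmegaR]
    rw [he]
    refine isClosed_biInter fun n _ => ?_
    rw [← isOpen_compl_iff]
    refine isOpen_iff_forall_mem_open.mpr fun ω hω => ?_
    refine ⟨{ξ | ∀ k < n, ξ k = ω k}, fun ξ hξ => ?_, L63_cyl_open ω n, fun k _ => rfl⟩
    simp only [Set.mem_compl_iff, Set.mem_setOf_eq, not_not] at hω ⊢
    rw [L63_wordProd_congr A hξ]
    exact hω
  exact hc.isCompact

lemma L63_bdd {d a : ℕ} (A : Fin (a+1) → Matrix (Fin d) (Fin d) ℝ)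
    (hnn : ∀ i p q, 0 ≤ A i p q) (R : Fin d → ℝ) (hR : probVec R)
    (n : ℕ) (ω : ℕ → Fin (a+1)) :
    (2:ℝ) ∈ upperBounds {x : ℝ | ∃ ξ ∈ OmegaR A R, (∀ k < n, ξ k = ω k) ∧ ∃ r : ℕ,
      x = l1 (nrm (wordProd A ξ (n + r) *ᵥ R) - nrm (wordProd A ξ n *ᵥ R))} := by
  rintro x ⟨ξ, hξ, -, r, rfl⟩
  calc l1 _ ≤ l1 (nrm (wordProd A ξ (n + r) *ᵥ R)) + l1 (nrm (wordProd A ξ n *ᵥ R)) :=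
        L63_l1_sub_le _ _
    _ = 2 := by
        rw [L63_l1_nrm_one A hnn R hR hξ, L63_l1_nrm_one A hnn R hR hξ]; norm_num

lemma L63_zero_mem {d a : ℕ} (A : Fin (a+1) → Matrix (Fin d) (Fin d) ℝ) (R : Fin d → ℝ)
    {ω : ℕ → Fin (a+1)} (hω : ω ∈ OmegaR A R) (n : ℕ) :
    (0:ℝ) ∈ {x : ℝ | ∃ ξ ∈ OmegaR A R, (∀ k < n, ξ k = ω k) ∧ ∃ r : ℕ,
      x = l1 (nrm (wordProd A ξ (n + r) *ᵥ R) - nrm (wordProd A ξ n *ᵥ R))} :=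
  ⟨ω, hω, fun _ _ => rfl, 0, by simp [l1]⟩


/-- **Lemma 6.3.** `Π_n(·,R)` converges uniformly on `Ω_R` if and only if, for every
`ω ∈ Ω_R`, the supremum of `‖Π_{n+r}(ξ,R) − Π_n(ξ,R)‖` over `ξ ∈ [ω_1⋯ω_n] ∩ Ω_R` and
`r ≥ 0` tends to `0` as `n → ∞`. -/
theorem uniform_iff_cylinderCauchy {d a : ℕ}
    (A : Fin (a + 1) → Matrix (Fin d) (Fin d) ℝ)
    (hnn : ∀ i p q, 0 ≤ A i p q)
    (R : Fin d → ℝ) (hR : probVec R) :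
    (∃ Vm : (ℕ → Fin (a + 1)) → (Fin d → ℝ),
      TendstoUniformlyOn (fun n ω => nrm (wordProd A ω n *ᵥ R)) Vm atTop (OmegaR A R)) ↔
    ∀ ω ∈ OmegaR A R,
      Tendsto (fun n : ℕ =>
          sSup {x : ℝ | ∃ ξ ∈ OmegaR A R, (∀ k < n, ξ k = ω k) ∧ ∃ r : ℕ,
            x = l1 (nrm (wordProd A ξ (n + r) *ᵥ R) - nrm (wordProd A ξ n *ᵥ R))})
        atTop (nhds 0) := by
  classical
  constructor
  · rintro ⟨Vm, hVm⟩ ω hω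
    rw [Metric.tendsto_atTop]
    intro ε hε
    have h2d : (0:ℝ) < 2*(d:ℝ)+2 := by positivity
    have hε' : (0:ℝ) < ε / (2*(d:ℝ)+2) := by positivity
    obtain ⟨N, hN⟩ := Filter.eventually_atTop.mp
      (Metric.tendstoUniformlyOn_iff.mp hVm _ hε')
    refine ⟨N, fun n hn => ?_⟩
    have hub : ∀ x ∈ {x : ℝ | ∃ ξ ∈ OmegaR A R, (∀ k < n, ξ k = ω k) ∧ ∃ r : ℕ,
        x = l1 (nrm (wordProd A ξ (n + r) *ᵥ R) - nrm (wordProd A ξ n *ᵥ R))},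
        x ≤ (d:ℝ) * (2 * (ε/(2*(d:ℝ)+2))) := by
      rintro x ⟨ξ, hξ, -, r, rfl⟩
      have h1 : dist (Vm ξ) (nrm (wordProd A ξ (n+r) *ᵥ R)) < ε/(2*(d:ℝ)+2) :=
        hN (n+r) (le_trans hn (Nat.le_add_right n r)) ξ hξ
      have h2 : dist (Vm ξ) (nrm (wordProd A ξ n *ᵥ R)) < ε/(2*(d:ℝ)+2) :=
        hN n hn ξ hξ
      have h3 : dist (nrm (wordProd A ξ (n+r) *ᵥ R)) (nrm (wordProd A ξ n *ᵥ R))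
          ≤ 2 * (ε/(2*(d:ℝ)+2)) := by
        have := dist_triangle_left (nrm (wordProd A ξ (n+r) *ᵥ R))
          (nrm (wordProd A ξ n *ᵥ R)) (Vm ξ)
        linarith
      calc l1 (nrm (wordProd A ξ (n + r) *ᵥ R) - nrm (wordProd A ξ n *ᵥ R))
          ≤ (d:ℝ) * dist (nrm (wordProd A ξ (n+r) *ᵥ R)) (nrm (wordProd A ξ n *ᵥ R)) :=
            L63_l1_sub_le_dist _ _
        _ ≤ (d:ℝ) * (2 * (ε/(2*(d:ℝ)+2))) := by
            exact mul_le_mul_of_nonneg_left h3 (Nat.cast_nonneg d)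
    have hsle : sSup {x : ℝ | ∃ ξ ∈ OmegaR A R, (∀ k < n, ξ k = ω k) ∧ ∃ r : ℕ,
        x = l1 (nrm (wordProd A ξ (n + r) *ᵥ R) - nrm (wordProd A ξ n *ᵥ R))}
        ≤ (d:ℝ) * (2 * (ε/(2*(d:ℝ)+2))) := Real.sSup_le hub (by positivity)
    have hs0 : (0:ℝ) ≤ sSup {x : ℝ | ∃ ξ ∈ OmegaR A R, (∀ k < n, ξ k = ω k) ∧ ∃ r : ℕ,
        x = l1 (nrm (wordProd A ξ (n + r) *ᵥ R) - nrm (wordProd A ξ n *ᵥ R))} :=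
      le_csSup ⟨_, hub⟩ (L63_zero_mem A R hω n)
    have hlt : (d:ℝ) * (2*(ε/(2*(d:ℝ)+2))) < ε := by
      have e2 : ((2:ℝ)*(d:ℝ)+2) * (ε/(2*(d:ℝ)+2)) = ε := by field_simp
      have e3 : ((2:ℝ)*(d:ℝ)) * (ε/(2*(d:ℝ)+2)) < ((2:ℝ)*(d:ℝ)+2) * (ε/(2*(d:ℝ)+2)) :=
        mul_lt_mul_of_pos_right (by linarith) hε'
      calc (d:ℝ) * (2*(ε/(2*(d:ℝ)+2))) = ((2:ℝ)*(d:ℝ)) * (ε/(2*(d:ℝ)+2)) := by ring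
        _ < ((2:ℝ)*(d:ℝ)+2) * (ε/(2*(d:ℝ)+2)) := e3
        _ = ε := e2
    rw [Real.dist_eq, sub_zero, abs_of_nonneg hs0]
    exact lt_of_le_of_lt hsle hlt
  · intro hyp
    have hcauchy : ∀ ξ ∈ OmegaR A R,
        CauchySeq (fun n => nrm (wordProd A ξ n *ᵥ R)) := by
      intro ξ hξ
      rw [Metric.cauchySeq_iff']
      intro ε hε
      obtain ⟨N, hN⟩ := Metric.tendsto_atTop.mp (hyp ξ hξ) ε hε
      refine ⟨N, fun n hn => ?_⟩
      have hb := hN N le_rfl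
      rw [Real.dist_eq, sub_zero] at hb
      have hmem : l1 (nrm (wordProd A ξ n *ᵥ R) - nrm (wordProd A ξ N *ᵥ R))
          ∈ {x : ℝ | ∃ ζ ∈ OmegaR A R, (∀ k < N, ζ k = ξ k) ∧ ∃ r : ℕ,
            x = l1 (nrm (wordProd A ζ (N + r) *ᵥ R) - nrm (wordProd A ζ N *ᵥ R))} :=
        ⟨ξ, hξ, fun _ _ => rfl, n - N, by rw [Nat.add_sub_cancel' hn]⟩
      calc dist (nrm (wordProd A ξ n *ᵥ R)) (nrm (wordProd A ξ N *ᵥ R))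
          ≤ l1 (nrm (wordProd A ξ n *ᵥ R) - nrm (wordProd A ξ N *ᵥ R)) := L63_dist_le_l1 _ _
        _ ≤ sSup {x : ℝ | ∃ ζ ∈ OmegaR A R, (∀ k < N, ζ k = ξ k) ∧ ∃ r : ℕ,
            x = l1 (nrm (wordProd A ζ (N + r) *ᵥ R) - nrm (wordProd A ζ N *ᵥ R))} :=
            le_csSup ⟨2, L63_bdd A hnn R hR N ξ⟩ hmem
        _ ≤ |sSup {x : ℝ | ∃ ζ ∈ OmegaR A R, (∀ k < N, ζ k = ξ k) ∧ ∃ r : ℕ,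
            x = l1 (nrm (wordProd A ζ (N + r) *ᵥ R) - nrm (wordProd A ζ N *ᵥ R))}| :=
            le_abs_self _
        _ < ε := hb
    set Vm : (ℕ → Fin (a+1)) → (Fin d → ℝ) :=
      fun ξ => limUnder atTop (fun n => nrm (wordProd A ξ n *ᵥ R)) with hVmdef
    have hVt : ∀ ξ ∈ OmegaR A R,
        Tendsto (fun n => nrm (wordProd A ξ n *ᵥ R)) atTop (𝓝 (Vm ξ)) := by
      intro ξ hξ
      obtain ⟨x, hx⟩ := cauchySeq_tendsto_of_complete (hcauchy ξ hξ)
      have hVx : Vm ξ = x := hx.limUnder_eq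
      rw [hVx]; exact hx
    refine ⟨Vm, ?_⟩
    rw [Metric.tendstoUniformlyOn_iff]
    intro ε hε
    have hε3 : (0:ℝ) < ε/3 := by positivity
    have hch : ∀ ξ : {x // x ∈ OmegaR A R}, ∃ M : ℕ,
        sSup {x : ℝ | ∃ ζ ∈ OmegaR A R, (∀ k < M, ζ k = ξ.1 k) ∧ ∃ r : ℕ,
          x = l1 (nrm (wordProd A ζ (M + r) *ᵥ R) - nrm (wordProd A ζ M *ᵥ R))} < ε/3 := by
      intro ξ
      obtain ⟨N, hN⟩ := Metric.tendsto_atTop.mp (hyp ξ.1 ξ.2) (ε/3) hε3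
      refine ⟨N, ?_⟩
      have := hN N le_rfl
      rw [Real.dist_eq, sub_zero] at this
      exact lt_of_le_of_lt (le_abs_self _) this
    choose m hm using hch
    obtain ⟨t, ht⟩ := (L63_omega_compact A R).elim_finite_subcover
      (fun ξ : {x // x ∈ OmegaR A R} => {η : ℕ → Fin (a+1) | ∀ k < m ξ, η k = ξ.1 k})
      (fun ξ => L63_cyl_open _ _)
      (fun η hη => Set.mem_iUnion.mpr ⟨⟨η, hη⟩, fun k _ => rfl⟩)
    refine Filter.eventually_atTop.mpr ⟨t.sup m, fun n hn ξ hξ => ?_⟩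
    obtain ⟨ζ, hζt, hζ⟩ := Set.mem_iUnion₂.mp (ht hξ)
    have hMn : m ζ ≤ n := le_trans (Finset.le_sup hζt) hn
    have hbdd : BddAbove {x : ℝ | ∃ η ∈ OmegaR A R, (∀ k < m ζ, η k = ζ.1 k) ∧ ∃ r : ℕ,
        x = l1 (nrm (wordProd A η (m ζ + r) *ᵥ R) - nrm (wordProd A η (m ζ) *ᵥ R))} :=
      ⟨2, L63_bdd A hnn R hR (m ζ) ζ.1⟩
    have hmem1 : l1 (nrm (wordProd A ξ n *ᵥ R) - nrm (wordProd A ξ (m ζ) *ᵥ R))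
        ∈ {x : ℝ | ∃ η ∈ OmegaR A R, (∀ k < m ζ, η k = ζ.1 k) ∧ ∃ r : ℕ,
          x = l1 (nrm (wordProd A η (m ζ + r) *ᵥ R) - nrm (wordProd A η (m ζ) *ᵥ R))} :=
      ⟨ξ, hξ, hζ, n - m ζ, by rw [Nat.add_sub_cancel' hMn]⟩
    have h1 : dist (nrm (wordProd A ξ n *ᵥ R)) (nrm (wordProd A ξ (m ζ) *ᵥ R))
        ≤ sSup {x : ℝ | ∃ η ∈ OmegaR A R, (∀ k < m ζ, η k = ζ.1 k) ∧ ∃ r : ℕ,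
          x = l1 (nrm (wordProd A η (m ζ + r) *ᵥ R) - nrm (wordProd A η (m ζ) *ᵥ R))} :=
      (L63_dist_le_l1 _ _).trans (le_csSup hbdd hmem1)
    have h2 : Tendsto (fun r => dist (nrm (wordProd A ξ (r + m ζ) *ᵥ R))
        (nrm (wordProd A ξ (m ζ) *ᵥ R))) atTop
        (𝓝 (dist (Vm ξ) (nrm (wordProd A ξ (m ζ) *ᵥ R)))) :=
      ((hVt ξ hξ).comp (Filter.tendsto_add_atTop_nat (m ζ))).dist tendsto_const_nhds
    have h3 : dist (Vm ξ) (nrm (wordProd A ξ (m ζ) *ᵥ R))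
        ≤ sSup {x : ℝ | ∃ η ∈ OmegaR A R, (∀ k < m ζ, η k = ζ.1 k) ∧ ∃ r : ℕ,
          x = l1 (nrm (wordProd A η (m ζ + r) *ᵥ R) - nrm (wordProd A η (m ζ) *ᵥ R))} :=
      le_of_tendsto h2 (Filter.Eventually.of_forall fun r =>
        (L63_dist_le_l1 _ _).trans (le_csSup hbdd ⟨ξ, hξ, hζ, r, by rw [add_comm]⟩))
    have htri : dist (Vm ξ) (nrm (wordProd A ξ n *ᵥ R))
        ≤ dist (Vm ξ) (nrm (wordProd A ξ (m ζ) *ᵥ R))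
          + dist (nrm (wordProd A ξ (m ζ) *ᵥ R)) (nrm (wordProd A ξ n *ᵥ R)) :=
      dist_triangle _ _ _
    have h1' := h1
    rw [dist_comm] at h1'
    have hs := hm ζ
    linarith
end
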